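/- The Koranyi norm |(z,u)| := (|z|⁴ + 16u²)^{1/4} satisfies the triangle inequality |g₁g₂| ≤ |g₁| + |g₂| for all g₁, g₂ ∈ ℍ_n, and hence d_K(g₁,g₂) := |g₁⁻¹g₂| is a left-invariant metric on ℍ_n. -/

import Mathlib

/-- The canonical symplectic form `⟨z,w⟩ = ᵗz J w` with `J = [[0,I],[−I,0]]`. -/
noncomputable def symp (n : ℕ) (z w : EuclideanSpace ℝ (Fin n ⊕ Fin n)) : ℝ :=
  ∑ i : Fin n, z (Sum.inl i) * w (Sum.inr i) - ∑ i : Fin n, z (Sum.inr i) * w (Sum.inl i)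

/-- The Heisenberg product on `ℝ^{2n} × ℝ`. -/
noncomputable def Hmul (n : ℕ) (a b : EuclideanSpace ℝ (Fin n ⊕ Fin n) × ℝ) :
    EuclideanSpace ℝ (Fin n ⊕ Fin n) × ℝ :=
  (a.1 + b.1, a.2 + b.2 + (1 / 2) * symp n a.1 b.1)

/-- The Koranyi norm `|(z,u)| = (|z|⁴ + 16u²)^{1/4}`. -/
noncomputable def kor (n : ℕ) (g : EuclideanSpace ℝ (Fin n ⊕ Fin n) × ℝ) : ℝ :=
  (‖g.1‖ ^ 4 + 16 * g.2 ^ 2) ^ ((1 : ℝ) / 4)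

/-- The Koranyi metric `d_K(g₁,g₂) = |g₁⁻¹ g₂|`. -/
noncomputable def dK (n : ℕ) (g₁ g₂ : EuclideanSpace ℝ (Fin n ⊕ Fin n) × ℝ) : ℝ :=
  kor n (Hmul n (-g₁.1, -g₁.2) g₂)

/-!
Writing `g = (z, u)`, one has `kor g ^ 2 = ‖‖z‖² + 4 u i‖`. Identify `ℝ^{2n}` with `ℂⁿ`; then
`⟪z, w⟫ + i ω(z, w)` is the hermitian product of `z` and `w`, so for `g = (z, u)` and `h = (w, v)`
the complex number `‖z + w‖² + 4 (u + v + ω(z, w)/2) i` attached to `g h` is the sum of those of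
`g` and `h` plus twice that hermitian product. Cauchy–Schwarz bounds the latter by
`‖z‖ ‖w‖ ≤ kor g * kor h`, whence `kor (g h) ^ 2 ≤ (kor g + kor h) ^ 2`. The metric axioms then
follow from the group laws, with `-g` as the inverse of `g`.
-/

section Heisenberg

variable {n : ℕ}

@[simp]
lemma symp_add_left (z z' w : EuclideanSpace ℝ (Fin n ⊕ Fin n)) :
    symp n (z + z') w = symp n z w + symp n z' w := by
  simp only [symp, PiLp.add_apply, add_mul, Finset.sum_add_distrib]; ring

@[simp]
lemma symp_add_right (z w w' : EuclideanSpace ℝ (Fin n ⊕ Fin n)) :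
    symp n z (w + w') = symp n z w + symp n z w' := by
  simp only [symp, PiLp.add_apply, mul_add, Finset.sum_add_distrib]; ring

@[simp]
lemma symp_neg_left (z w : EuclideanSpace ℝ (Fin n ⊕ Fin n)) :
    symp n (-z) w = -symp n z w := by
  simp only [symp, PiLp.neg_apply, neg_mul, Finset.sum_neg_distrib]; ring

@[simp]
lemma symp_neg_right (z w : EuclideanSpace ℝ (Fin n ⊕ Fin n)) :
    symp n z (-w) = -symp n z w := by
  simp only [symp, PiLp.neg_apply, mul_neg, Finset.sum_neg_distrib]; ring

@[simp]
lemma symp_zero_right (z : EuclideanSpace ℝ (Fin n ⊕ Fin n)) : symp n z 0 = 0 := by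
  simp [symp]

@[simp]
lemma symp_self (z : EuclideanSpace ℝ (Fin n ⊕ Fin n)) : symp n z z = 0 := by
  simp only [symp, mul_comm, sub_self]

lemma symp_antisymm (z w : EuclideanSpace ℝ (Fin n ⊕ Fin n)) : symp n z w = -symp n w z := by
  simp only [symp, mul_comm, neg_sub]

lemma Hmul_assoc (a b c : EuclideanSpace ℝ (Fin n ⊕ Fin n) × ℝ) :
    Hmul n (Hmul n a b) c = Hmul n a (Hmul n b c) := by
  ext1
  · exact add_assoc _ _ _
  · simp only [Hmul, symp_add_left, symp_add_right]; ring

@[simp]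
lemma Hmul_zero (g : EuclideanSpace ℝ (Fin n ⊕ Fin n) × ℝ) : Hmul n g 0 = g := by
  ext1 <;> simp [Hmul]

@[simp]
lemma neg_Hmul_cancel (g : EuclideanSpace ℝ (Fin n ⊕ Fin n) × ℝ) : Hmul n (-g) g = 0 := by
  ext1 <;> simp [Hmul]

@[simp]
lemma neg_Hmul_cancel_left (a b : EuclideanSpace ℝ (Fin n ⊕ Fin n) × ℝ) :
    Hmul n (-a) (Hmul n a b) = b := by
  ext1
  · simp [Hmul]
  · simp [Hmul]; ring

@[simp]
lemma Hmul_neg_cancel_left (a b : EuclideanSpace ℝ (Fin n ⊕ Fin n) × ℝ) :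
    Hmul n a (Hmul n (-a) b) = b := by
  ext1
  · simp [Hmul]
  · simp [Hmul]; ring

lemma neg_Hmul_rev (a b : EuclideanSpace ℝ (Fin n ⊕ Fin n) × ℝ) :
    -Hmul n a b = Hmul n (-b) (-a) := by
  ext1
  · simp only [Hmul, Prod.fst_neg, neg_add_rev]
  · simp only [Hmul, Prod.snd_neg, Prod.fst_neg, symp_neg_left, symp_neg_right, symp_antisymm b.1]
    ring

noncomputable def toComplex (z : EuclideanSpace ℝ (Fin n ⊕ Fin n)) : EuclideanSpace ℂ (Fin n) :=
  WithLp.toLp 2 fun i => ⟨z (Sum.inl i), z (Sum.inr i)⟩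

lemma norm_toComplex (z : EuclideanSpace ℝ (Fin n ⊕ Fin n)) : ‖toComplex z‖ = ‖z‖ := by
  simp only [EuclideanSpace.norm_eq, Fintype.sum_sum_type, ← Finset.sum_add_distrib, toComplex,
    Complex.sq_norm, Complex.normSq_mk, Real.norm_eq_abs, sq_abs]
  simp only [sq]

lemma inner_toComplex (z w : EuclideanSpace ℝ (Fin n ⊕ Fin n)) :
    inner ℂ (toComplex z) (toComplex w) = ⟨inner ℝ z w, symp n z w⟩ := by
  apply Complex.ext
  · simp [toComplex, PiLp.inner_apply, Fintype.sum_sum_type, Complex.mul_re, mul_comm,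
      Finset.sum_add_distrib]
  · simp [toComplex, PiLp.inner_apply, Complex.mul_im, symp, mul_comm, Finset.sum_add_distrib,
      sub_eq_add_neg]
    ring

noncomputable def korComplex (g : EuclideanSpace ℝ (Fin n ⊕ Fin n) × ℝ) : ℂ := ⟨‖g.1‖ ^ 2, 4 * g.2⟩

lemma korComplex_Hmul (g h : EuclideanSpace ℝ (Fin n ⊕ Fin n) × ℝ) :
    korComplex (Hmul n g h) =
      korComplex g + korComplex h + 2 * inner ℂ (toComplex g.1) (toComplex h.1) := by
  rw [inner_toComplex]
  apply Complex.ext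
  · simp only [korComplex, Hmul, norm_add_sq_real, Complex.add_re, Complex.mul_re]; norm_num; ring
  · simp only [korComplex, Hmul, Complex.add_im, Complex.mul_im]; norm_num; ring

lemma kor_eq_sqrt (g : EuclideanSpace ℝ (Fin n ⊕ Fin n) × ℝ) :
    kor n g = √‖korComplex g‖ := by
  have hnorm : ‖korComplex g‖ = √(‖g.1‖ ^ 4 + 16 * g.2 ^ 2) := by
    rw [korComplex, Complex.norm_def, Complex.normSq_mk]; ring_nf
  rw [kor, hnorm, Real.sqrt_eq_rpow, Real.sqrt_eq_rpow, ← Real.rpow_mul (by positivity)]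
  norm_num

lemma kor_nonneg (g : EuclideanSpace ℝ (Fin n ⊕ Fin n) × ℝ) : 0 ≤ kor n g := by
  rw [kor_eq_sqrt]; positivity

lemma kor_sq (g : EuclideanSpace ℝ (Fin n ⊕ Fin n) × ℝ) :
    kor n g ^ 2 = ‖korComplex g‖ := by
  rw [kor_eq_sqrt, Real.sq_sqrt (norm_nonneg _)]

lemma norm_le_kor (g : EuclideanSpace ℝ (Fin n ⊕ Fin n) × ℝ) : ‖g.1‖ ≤ kor n g := by
  rw [kor_eq_sqrt, ← Real.sqrt_sq (norm_nonneg g.1)]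
  exact Real.sqrt_le_sqrt (Complex.re_le_norm (korComplex g))

lemma kor_Hmul_le (g h : EuclideanSpace ℝ (Fin n ⊕ Fin n) × ℝ) :
    kor n (Hmul n g h) ≤ kor n g + kor n h := by
  have cauchy_schwarz : ‖inner ℂ (toComplex g.1) (toComplex h.1)‖ ≤ kor n g * kor n h := by
    refine (norm_inner_le_norm _ _).trans ?_
    rw [norm_toComplex, norm_toComplex]
    exact mul_le_mul (norm_le_kor g) (norm_le_kor h) (norm_nonneg _) (kor_nonneg g)
  have hsq : ‖korComplex (Hmul n g h)‖ ≤ (kor n g + kor n h) ^ 2 :=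
    calc ‖korComplex (Hmul n g h)‖
        ≤ ‖korComplex g‖ + ‖korComplex h‖
            + 2 * ‖inner ℂ (toComplex g.1) (toComplex h.1)‖ := by
          rw [korComplex_Hmul]
          refine (norm_add_le _ _).trans (add_le_add (norm_add_le _ _) ?_)
          rw [norm_mul, Complex.norm_two]
      _ ≤ kor n g ^ 2 + kor n h ^ 2 + 2 * (kor n g * kor n h) := by
          rw [kor_sq, kor_sq]; gcongr
      _ = (kor n g + kor n h) ^ 2 := by ring
  rw [kor_eq_sqrt, ← Real.sqrt_sq (add_nonneg (kor_nonneg g) (kor_nonneg h))]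
  exact Real.sqrt_le_sqrt hsq

lemma kor_neg (g : EuclideanSpace ℝ (Fin n ⊕ Fin n) × ℝ) : kor n (-g) = kor n g := by
  simp [kor]

lemma kor_eq_zero_iff {g : EuclideanSpace ℝ (Fin n ⊕ Fin n) × ℝ} : kor n g = 0 ↔ g = 0 := by
  rw [kor_eq_sqrt, Real.sqrt_eq_zero (norm_nonneg _), norm_eq_zero, korComplex,
    Complex.ext_iff, Prod.ext_iff]
  simp

lemma dK_eq (g₁ g₂ : EuclideanSpace ℝ (Fin n ⊕ Fin n) × ℝ) :
    dK n g₁ g₂ = kor n (Hmul n (-g₁) g₂) :=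
  rfl

lemma dK_self (g : EuclideanSpace ℝ (Fin n ⊕ Fin n) × ℝ) : dK n g g = 0 := by
  rw [dK_eq, neg_Hmul_cancel, kor_eq_zero_iff]

lemma eq_of_dK_eq_zero {g₁ g₂ : EuclideanSpace ℝ (Fin n ⊕ Fin n) × ℝ} (h : dK n g₁ g₂ = 0) :
    g₁ = g₂ := by
  rw [dK_eq, kor_eq_zero_iff] at h
  simpa using (congrArg (Hmul n g₁) h).symm

lemma dK_comm (g₁ g₂ : EuclideanSpace ℝ (Fin n ⊕ Fin n) × ℝ) : dK n g₁ g₂ = dK n g₂ g₁ := by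
  rw [dK_eq, dK_eq, ← kor_neg, neg_Hmul_rev, neg_neg]

lemma dK_triangle (g₁ g₂ g₃ : EuclideanSpace ℝ (Fin n ⊕ Fin n) × ℝ) :
    dK n g₁ g₃ ≤ dK n g₁ g₂ + dK n g₂ g₃ := by
  have h : Hmul n (Hmul n (-g₁) g₂) (Hmul n (-g₂) g₃) = Hmul n (-g₁) g₃ := by
    rw [Hmul_assoc, Hmul_neg_cancel_left]
  simpa only [dK_eq, h] using kor_Hmul_le (Hmul n (-g₁) g₂) (Hmul n (-g₂) g₃)

lemma dK_Hmul_left (h g₁ g₂ : EuclideanSpace ℝ (Fin n ⊕ Fin n) × ℝ) :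
    dK n (Hmul n h g₁) (Hmul n h g₂) = dK n g₁ g₂ := by
  rw [dK_eq, dK_eq, neg_Hmul_rev, Hmul_assoc, neg_Hmul_cancel_left]

end Heisenberg

theorem koranyi_triangle_and_metric (n : ℕ) :
    (∀ g₁ g₂ : EuclideanSpace ℝ (Fin n ⊕ Fin n) × ℝ,
      kor n (Hmul n g₁ g₂) ≤ kor n g₁ + kor n g₂) ∧
    (∀ g, dK n g g = 0) ∧
    (∀ g₁ g₂, dK n g₁ g₂ = 0 → g₁ = g₂) ∧
    (∀ g₁ g₂, dK n g₁ g₂ = dK n g₂ g₁) ∧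
    (∀ g₁ g₂ g₃, dK n g₁ g₃ ≤ dK n g₁ g₂ + dK n g₂ g₃) ∧
    (∀ h g₁ g₂, dK n (Hmul n h g₁) (Hmul n h g₂) = dK n g₁ g₂) :=
  ⟨kor_Hmul_le, dK_self, fun _ _ => eq_of_dK_eq_zero, dK_comm, dK_triangle, dK_Hmul_left⟩
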